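/- arXiv:1312.0772 — 4 statements merged into one kernel-verified Lean document; each statement's English description precedes it below -/
import Mathlib

section
/- If S is an LD-set of a graph G, then S is an LD-set of the complement Ḡ if and only if there is no vertex u ∈ V \ S with S ⊆ N_G(u) (i.e., no vertex outside S dominates S in G). -/
variable {V : Type*}

/-- `S` is a dominating set of `G`: every vertex outside `S` has a neighbor in `S`. -/
def IsDominatingSet (G : SimpleGraph V) (S : Set V) : Prop :=
  ∀ v ∉ S, (G.neighborSet v ∩ S).Nonempty

/-- `S` is a locating-dominating set of `G`. -/
def IsLDSet (G : SimpleGraph V) (S : Set V) : Prop :=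
  IsDominatingSet G S ∧
    ∀ u ∉ S, ∀ v ∉ S, G.neighborSet u ∩ S = G.neighborSet v ∩ S → u = v

/-- The location-domination number of `G`. -/
noncomputable def ldNum [Fintype V] (G : SimpleGraph V) : ℕ :=
  sInf {n | ∃ S : Set V, IsLDSet G S ∧ S.ncard = n}

/-- `S` is a global LD-set of `G`: an LD-set of both `G` and its complement. -/
def IsGlobalLDSet (G : SimpleGraph V) (S : Set V) : Prop :=
  IsLDSet G S ∧ IsLDSet Gᶜ S

/-- The global location-domination number of `G`. -/
noncomputable def gldNum [Fintype V] (G : SimpleGraph V) : ℕ :=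
  sInf {n | ∃ S : Set V, IsGlobalLDSet G S ∧ S.ncard = n}

/- The complement turns the trace `N_G(x) ∩ S` of an outside vertex into `S \ N_G(x)`. Hence domination
in `Gᶜ` fails exactly at a vertex outside `S` adjacent to all of `S`, while the locating condition
transfers unchanged, since `S \ A = S \ B ↔ A ∩ S = B ∩ S`. -/

theorem Set.sdiff_eq_sdiff_iff_inter_eq_inter {α : Type*} {S A B : Set α} :
    S \ A = S \ B ↔ A ∩ S = B ∩ S := by
  constructor
  · intro h
    rw [Set.inter_comm A, Set.inter_comm B, ← Set.sdiff_sdiff_right_self, h,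
      Set.sdiff_sdiff_right_self]
  · intro h
    rw [← Set.sdiff_inter_self_eq_sdiff, h, Set.sdiff_inter_self_eq_sdiff]

theorem compl_neighborSet_inter_eq_sdiff (G : SimpleGraph V) {S : Set V} {x : V} (hx : x ∉ S) :
    Gᶜ.neighborSet x ∩ S = S \ G.neighborSet x := by
  ext s
  simp only [Set.mem_inter_iff, SimpleGraph.mem_neighborSet, SimpleGraph.compl_adj, Set.mem_sdiff]
  exact ⟨fun ⟨⟨_, hn⟩, hs⟩ => ⟨hs, hn⟩, fun ⟨hs, hn⟩ => ⟨⟨fun h => hx (h ▸ hs), hn⟩, hs⟩⟩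

theorem isDominatingSet_compl_iff (G : SimpleGraph V) (S : Set V) :
    IsDominatingSet Gᶜ S ↔ ¬ ∃ u ∉ S, S ⊆ G.neighborSet u := by
  simp only [IsDominatingSet, not_exists, not_and]
  refine forall₂_congr fun u hu => ?_
  rw [compl_neighborSet_inter_eq_sdiff G hu, Set.sdiff_nonempty]

theorem compl_neighborSet_inter_eq_iff (G : SimpleGraph V) {S : Set V} {u v : V} (hu : u ∉ S)
    (hv : v ∉ S) :
    Gᶜ.neighborSet u ∩ S = Gᶜ.neighborSet v ∩ S ↔ G.neighborSet u ∩ S = G.neighborSet v ∩ S := by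
  rw [compl_neighborSet_inter_eq_sdiff G hu, compl_neighborSet_inter_eq_sdiff G hv,
    Set.sdiff_eq_sdiff_iff_inter_eq_inter]

theorem stmt2_general (G : SimpleGraph V) (S : Set V) (hS : IsLDSet G S) :
    IsLDSet Gᶜ S ↔ ¬ ∃ u ∉ S, S ⊆ G.neighborSet u := by
  rw [IsLDSet, ← isDominatingSet_compl_iff]
  refine and_iff_left fun u hu v hv h => hS.2 u hu v hv ?_
  rwa [← compl_neighborSet_inter_eq_iff G hu hv]

theorem stmt2 [Fintype V] (G : SimpleGraph V) (S : Set V) (hS : IsLDSet G S) :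
    IsLDSet Gᶜ S ↔ ¬ ∃ u ∉ S, S ⊆ G.neighborSet u :=
  stmt2_general G S hS
end

section
/- If S is an LD-set of a graph G and u ∈ V \ S is a vertex with S ⊆ N_G(u), then S ∪ {u} is an LD-set of the complement Ḡ. -/
variable {V : Type*}

/-! Outside `S`, the trace of a vertex's `Ḡ`-neighbourhood on `S` is the complement in `S` of its
`G`-trace, so `S`, and any superset of it, still separates the vertices outside it in `Ḡ`. A vertex
`v ∉ S ∪ {u}` adjacent in `G` to all of `S` would have the same `G`-trace on `S` as `u`; hence `v`
has a `Ḡ`-neighbour in `S`. -/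

namespace SimpleGraph

variable {G : SimpleGraph V} {S T : Set V} {v w : V}

theorem compl_neighborSet_inter_of_notMem (hv : v ∉ S) :
    Gᶜ.neighborSet v ∩ S = S \ G.neighborSet v := by
  ext s
  simp only [Set.mem_inter_iff, mem_neighborSet, compl_adj, Set.mem_sdiff]
  exact ⟨fun ⟨⟨_, hns⟩, hs⟩ => ⟨hs, hns⟩, fun ⟨hs, hns⟩ => ⟨⟨fun h => hv (h ▸ hs), hns⟩, hs⟩⟩

theorem compl_neighborSet_inter_eq_iff (hv : v ∉ S) (hw : w ∉ S) :
    Gᶜ.neighborSet v ∩ S = Gᶜ.neighborSet w ∩ S ↔ G.neighborSet v ∩ S = G.neighborSet w ∩ S := by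
  rw [compl_neighborSet_inter_of_notMem hv, compl_neighborSet_inter_of_notMem hw]
  simp only [Set.ext_iff, Set.mem_sdiff, Set.mem_inter_iff]
  exact forall_congr' fun _ => by tauto

theorem locating_compl_of_subset
    (hS : ∀ v ∉ S, ∀ w ∉ S, G.neighborSet v ∩ S = G.neighborSet w ∩ S → v = w) (hST : S ⊆ T) :
    ∀ v ∉ T, ∀ w ∉ T, Gᶜ.neighborSet v ∩ T = Gᶜ.neighborSet w ∩ T → v = w := by
  intro v hv w hw h
  have hvS : v ∉ S := fun h => hv (hST h)
  have hwS : w ∉ S := fun h => hw (hST h)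
  refine hS v hvS w hwS ((compl_neighborSet_inter_eq_iff hvS hwS).1 ?_)
  simpa only [Set.inter_assoc, Set.inter_eq_right.2 hST] using congrArg (· ∩ S) h

end SimpleGraph

section LDSet

open SimpleGraph

variable {G : SimpleGraph V} {S : Set V} {u v w : V}

theorem IsLDSet.eq_of_subset_neighborSet (hS : IsLDSet G S) (hv : v ∉ S) (hw : w ∉ S)
    (hSv : S ⊆ G.neighborSet v) (hSw : S ⊆ G.neighborSet w) : v = w :=
  hS.2 v hv w hw (by rw [Set.inter_eq_right.2 hSv, Set.inter_eq_right.2 hSw])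

theorem IsLDSet.isDominatingSet_compl_union_singleton (hS : IsLDSet G S) (hu : u ∉ S)
    (hdom : S ⊆ G.neighborSet u) : IsDominatingSet Gᶜ (S ∪ {u}) := by
  intro v hv
  have hvS : v ∉ S := fun h => hv (Or.inl h)
  have hnot : ¬S ⊆ G.neighborSet v := fun hSv =>
    hv (Or.inr (hS.eq_of_subset_neighborSet hvS hu hSv hdom))
  rw [← Set.sdiff_nonempty, ← compl_neighborSet_inter_of_notMem hvS] at hnot
  exact hnot.mono (Set.inter_subset_inter_right _ Set.subset_union_left)

end LDSet

theorem stmt4_general (G : SimpleGraph V) (S : Set V) (hS : IsLDSet G S)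
    (u : V) (hu : u ∉ S) (hdom : S ⊆ G.neighborSet u) :
    IsLDSet Gᶜ (S ∪ {u}) :=
  ⟨hS.isDominatingSet_compl_union_singleton hu hdom,
    SimpleGraph.locating_compl_of_subset hS.2 Set.subset_union_left⟩

theorem stmt4 [Fintype V] (G : SimpleGraph V) (S : Set V) (hS : IsLDSet G S)
    (u : V) (hu : u ∉ S) (hdom : S ⊆ G.neighborSet u) :
    IsLDSet Gᶜ (S ∪ {u}) :=
  stmt4_general G S hS u hu hdom
end

section
/- For every finite simple graph G, |λ(G) − λ(Ḡ)| ≤ 1, where λ denotes the location-domination number. -/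
/-!
The trace on `S` of a vertex `u ∉ S` in `Gᶜ` is `S` minus its trace in `G`, so a set locating
for `G` is locating for `Gᶜ`. Being locating in `Gᶜ`, it leaves at most one vertex outside `S`
undominated in `Gᶜ`, and adding that vertex gives an LD-set of `Gᶜ` with one more element.
Hence `λ(Ḡ) ≤ λ(G) + 1`, and the theorem follows by symmetry.
-/

variable {V : Type*}

theorem SimpleGraph.neighborSet_compl_inter_of_notMem {G : SimpleGraph V} {S : Set V} {u : V}
    (hu : u ∉ S) : Gᶜ.neighborSet u ∩ S = S \ G.neighborSet u := by
  ext x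
  simp only [SimpleGraph.neighborSet_compl, Set.mem_inter_iff, Set.mem_sdiff, Set.mem_compl_iff,
    Set.mem_singleton_iff]
  exact ⟨fun ⟨⟨hx, _⟩, hxS⟩ => ⟨hxS, hx⟩, fun ⟨hxS, hx⟩ => ⟨⟨hx, fun h => hu (h ▸ hxS)⟩, hxS⟩⟩

def IsLocatingSet (G : SimpleGraph V) (S : Set V) : Prop :=
  ∀ u ∉ S, ∀ v ∉ S, G.neighborSet u ∩ S = G.neighborSet v ∩ S → u = v

namespace IsLocatingSet

variable {G : SimpleGraph V} {S T : Set V}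

theorem mono (hS : IsLocatingSet G S) (hST : S ⊆ T) : IsLocatingSet G T := by
  intro u hu v hv huv
  apply hS u (fun h => hu (hST h)) v (fun h => hv (hST h))
  rw [← Set.inter_eq_right.2 hST, ← Set.inter_assoc, ← Set.inter_assoc, huv]

theorem compl (hS : IsLocatingSet G S) : IsLocatingSet Gᶜ S := by
  intro u hu v hv huv
  rw [SimpleGraph.neighborSet_compl_inter_of_notMem hu,
    SimpleGraph.neighborSet_compl_inter_of_notMem hv] at huv
  apply hS u hu v hv
  rw [Set.inter_comm, ← Set.sdiff_sdiff_right_self, huv, Set.sdiff_sdiff_right_self,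
    Set.inter_comm]

theorem isDominatingSet_insert (hS : IsLocatingSet G S) {w : V} (hw : w ∉ S)
    (hwS : G.neighborSet w ∩ S = ∅) : IsDominatingSet G (insert w S) := by
  intro v hv
  rw [Set.mem_insert_iff, not_or] at hv
  obtain ⟨hvw, hvS⟩ := hv
  have hv_dominated : (G.neighborSet v ∩ S).Nonempty :=
    Set.nonempty_iff_ne_empty.2 fun h => hvw (hS v hvS w hw (h.trans hwS.symm))
  exact hv_dominated.mono (Set.inter_subset_inter_right _ (Set.subset_insert w S))

end IsLocatingSet

theorem IsLDSet.exists_isLDSet_compl_ncard_le {G : SimpleGraph V} {S : Set V}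
    (hS : IsLDSet G S) : ∃ T, IsLDSet Gᶜ T ∧ T.ncard ≤ S.ncard + 1 := by
  have hloc : IsLocatingSet Gᶜ S := IsLocatingSet.compl hS.2
  by_cases hdom : IsDominatingSet Gᶜ S
  · exact ⟨S, ⟨hdom, hloc⟩, Nat.le_succ _⟩
  · obtain ⟨w, hw, hwS⟩ : ∃ w ∉ S, Gᶜ.neighborSet w ∩ S = ∅ := by
      simpa [IsDominatingSet, Set.not_nonempty_iff_eq_empty] using hdom
    exact ⟨insert w S, ⟨hloc.isDominatingSet_insert hw hwS, hloc.mono (Set.subset_insert w S)⟩,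
      Set.ncard_insert_le w S⟩

theorem isLDSet_univ (G : SimpleGraph V) : IsLDSet G Set.univ :=
  ⟨fun v hv => absurd (Set.mem_univ v) hv, fun u hu => absurd (Set.mem_univ u) hu⟩

section ldNum

variable [Fintype V] (G : SimpleGraph V)

theorem ldNum_le_ncard {S : Set V} (hS : IsLDSet G S) : ldNum G ≤ S.ncard :=
  Nat.sInf_le ⟨S, hS, rfl⟩

theorem exists_isLDSet_ncard_eq_ldNum : ∃ S : Set V, IsLDSet G S ∧ S.ncard = ldNum G :=
  Nat.sInf_mem (s := {n | ∃ S : Set V, IsLDSet G S ∧ S.ncard = n})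
    ⟨_, Set.univ, isLDSet_univ G, rfl⟩

theorem ldNum_compl_le : ldNum Gᶜ ≤ ldNum G + 1 := by
  obtain ⟨S, hS, hcard⟩ := exists_isLDSet_ncard_eq_ldNum G
  obtain ⟨T, hT, hTS⟩ := hS.exists_isLDSet_compl_ncard_le
  exact hcard ▸ (ldNum_le_ncard Gᶜ hT).trans hTS

end ldNum

theorem stmt5 [Fintype V] (G : SimpleGraph V) :
    |(ldNum G : ℤ) - (ldNum Gᶜ : ℤ)| ≤ 1 := by
  have h₁ := ldNum_compl_le G
  have h₂ := compl_compl G ▸ ldNum_compl_le Gᶜ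
  rw [abs_le]
  omega
end

section
/- Let G be a graph whose blocks are all cycles or complete graphs (a block-cactus), let S be an LD-set of G, and let u ∈ V \ S be a vertex with S ⊆ N(u). Then the subgraph of G induced by N(u) is a disjoint union of cliques. -/
variable {V : Type*}

/-- The induced subgraph on `B` is connected and has no cut vertex:
removing any vertex keeps it (pre)connected. -/
def NoCutVertexOn (G : SimpleGraph V) (B : Set V) : Prop :=
  ∀ v : V, (G.induce (B \ {v})).Preconnected

/-- `B` is a block of `G`: a maximal vertex set inducing a connected
subgraph with no cut vertex. -/
def IsBlock (G : SimpleGraph V) (B : Set V) : Prop :=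
  (G.induce B).Connected ∧ NoCutVertexOn G B ∧
    ∀ C : Set V, B ⊆ C → (G.induce C).Connected → NoCutVertexOn G C → B = C

/-- The induced subgraph on `B` is complete. -/
def IsCompleteOn (G : SimpleGraph V) (B : Set V) : Prop :=
  ∀ x ∈ B, ∀ y ∈ B, x ≠ y → G.Adj x y

/-- The induced subgraph on `B` is a cycle: connected and 2-regular. -/
def IsCycleOn (G : SimpleGraph V) (B : Set V) : Prop :=
  (G.induce B).Connected ∧ ∀ v : B, ((G.induce B).neighborSet v).ncard = 2

/-- `G` is a block-cactus: connected, and every block is a cycle or complete. -/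
def IsBlockCactus (G : SimpleGraph V) : Prop :=
  G.Connected ∧ ∀ B : Set V, IsBlock G B → IsCycleOn G B ∨ IsCompleteOn G B

/-!
If `u` is adjacent to `x, y, z` and `y` to `x, z`, then both `u` and `y` are adjacent to all other
vertices of `{u, x, y, z}`, so no single vertex separates this set and it lies in one block. That
block is not a cycle, since `u` has three neighbours in it; hence it is complete and `x z` is an edge.
-/

open SimpleGraph

lemma induce_preconnected_of_forall_adj (G : SimpleGraph V) {T : Set V} {h : V} (hh : h ∈ T)
    (hadj : ∀ w ∈ T, w ≠ h → G.Adj h w) : (G.induce T).Preconnected := by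
  have reach : ∀ c : T, (G.induce T).Reachable ⟨h, hh⟩ c := by
    rintro ⟨c, hc⟩
    by_cases hch : c = h
    · subst hch; rfl
    · exact Adj.reachable (by simpa using hadj c hc hch)
  exact fun a b => (reach a).symm.trans (reach b)

lemma induce_connected_of_forall_adj (G : SimpleGraph V) {T : Set V} {h : V} (hh : h ∈ T)
    (hadj : ∀ w ∈ T, w ≠ h → G.Adj h w) : (G.induce T).Connected :=
  have : Nonempty T := ⟨⟨h, hh⟩⟩
  .mk (induce_preconnected_of_forall_adj G hh hadj)

lemma noCutVertexOn_of_forall_adj₂ (G : SimpleGraph V) {T : Set V} {a b : V} (ha : a ∈ T)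
    (hb : b ∈ T) (hab : a ≠ b) (hadja : ∀ w ∈ T, w ≠ a → G.Adj a w)
    (hadjb : ∀ w ∈ T, w ≠ b → G.Adj b w) : NoCutVertexOn G T := by
  intro v
  by_cases hva : v = a
  · subst hva
    exact induce_preconnected_of_forall_adj G ⟨hb, hab.symm⟩ fun w hw hwb => hadjb w hw.1 hwb
  · exact induce_preconnected_of_forall_adj G ⟨ha, Ne.symm hva⟩ fun w hw hwa => hadja w hw.1 hwa

lemma exists_isBlock_superset [Finite V] (G : SimpleGraph V) {B₀ : Set V}
    (hconn : (G.induce B₀).Connected) (hcut : NoCutVertexOn G B₀) :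
    ∃ B, B₀ ⊆ B ∧ IsBlock G B := by
  obtain ⟨B, hB₀B, hmax⟩ := Set.Finite.exists_le_maximal (s := {C : Set V |
    B₀ ⊆ C ∧ (G.induce C).Connected ∧ NoCutVertexOn G C}) (Set.toFinite _) ⟨le_rfl, hconn, hcut⟩
  refine ⟨B, hB₀B, hmax.prop.2.1, hmax.prop.2.2, fun C hBC hCconn hCcut => ?_⟩
  exact hBC.antisymm (hmax.2 ⟨hB₀B.trans hBC, hCconn, hCcut⟩ hBC)

lemma IsCycleOn.not_three_adj [Finite V] {G : SimpleGraph V} {B : Set V} (hB : IsCycleOn G B)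
    {u x y z : V} (hu : u ∈ B) (hx : x ∈ B) (hy : y ∈ B) (hz : z ∈ B) (hux : G.Adj u x)
    (huy : G.Adj u y) (huz : G.Adj u z) (hxy : x ≠ y) (hxz : x ≠ z) (hyz : y ≠ z) : False := by
  have three : 2 < ((G.induce B).neighborSet ⟨u, hu⟩).ncard :=
    (Set.two_lt_ncard_iff).2 ⟨⟨x, hx⟩, ⟨y, hy⟩, ⟨z, hz⟩, by simpa using hux, by simpa using huy,
      by simpa using huz, by simpa using hxy, by simpa using hxz, by simpa using hyz⟩
  exact (hB.2 ⟨u, hu⟩).not_gt three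

theorem stmt18_general [Fintype V] (G : SimpleGraph V) (hG : IsBlockCactus G)
    (u : V) :
    ∀ x ∈ G.neighborSet u, ∀ y ∈ G.neighborSet u, ∀ z ∈ G.neighborSet u,
      G.Adj x y → G.Adj y z → x ≠ z → G.Adj x z := by
  intro x (hux : G.Adj u x) y (huy : G.Adj u y) z (huz : G.Adj u z) hxy hyz hxz
  have hu_adj : ∀ w ∈ ({u, x, y, z} : Set V), w ≠ u → G.Adj u w := by
    simp only [Set.mem_insert_iff, Set.mem_singleton_iff]
    rintro w (rfl | rfl | rfl | rfl) hw
    exacts [absurd rfl hw, hux, huy, huz]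
  have hy_adj : ∀ w ∈ ({u, x, y, z} : Set V), w ≠ y → G.Adj y w := by
    simp only [Set.mem_insert_iff, Set.mem_singleton_iff]
    rintro w (rfl | rfl | rfl | rfl) hw
    exacts [huy.symm, hxy.symm, absurd rfl hw, hyz]
  obtain ⟨B, hsub, hblock⟩ := exists_isBlock_superset G
    (induce_connected_of_forall_adj G (by simp) hu_adj)
    (noCutVertexOn_of_forall_adj₂ G (by simp) (by simp) huy.ne hu_adj hy_adj)
  have mem : ∀ w ∈ ({u, x, y, z} : Set V), w ∈ B := hsub
  rcases hG.2 B hblock with hcycle | hcomplete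
  · exact (hcycle.not_three_adj (mem u (by simp)) (mem x (by simp)) (mem y (by simp))
      (mem z (by simp)) hux huy huz hxy.ne hxz hyz.ne).elim
  · exact hcomplete x (mem x (by simp)) z (mem z (by simp)) hxz

/-- In a block-cactus, if `u ∉ S` dominates the LD-set `S`, then the subgraph
induced on `N(u)` is a disjoint union of cliques (equivalently, adjacency is
transitive on `N(u)`). -/
theorem stmt18 [Fintype V] (G : SimpleGraph V) (hG : IsBlockCactus G)
    (S : Set V) (hS : IsLDSet G S) (u : V) (hu : u ∉ S)
    (hdom : S ⊆ G.neighborSet u) :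
    ∀ x ∈ G.neighborSet u, ∀ y ∈ G.neighborSet u, ∀ z ∈ G.neighborSet u,
      G.Adj x y → G.Adj y z → x ≠ z → G.Adj x z :=
  stmt18_general G hG u
end
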